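/- arXiv:2212.13381 — 2 statements merged into one kernel-verified Lean document; each statement's English description precedes it below -/
import Mathlib

section
/- Let K ≥ 1, let f : ℝ^d → ℝ^C and h : ℝ^C → ℝ be K-times continuously differentiable, and fix x, x' ∈ ℝ^d and y ∈ ℝ^C. Then there exist functions ψ : (0,1] → ℝ^C and ψ̂ : (0,1] → ℝ, both tending to 0 as the argument tends to 0, such that for every a ∈ (0,1], writing Δ(a) = Σ_{k=1}^K (a^{k−1}/k!) D^k f(x)[(x'−x),…,(x'−x)] + a^{K−1} ψ(a), one has h(f(x + a(x'−x))) − yᵀ f(x + a(x'−x)) = h(f(x)) − yᵀ f(x) − a · yᵀ Δ(a) + Σ_{k=1}^K (a^k/k!) D^k h(f(x))[Δ(a),…,Δ(a)] + a^K ψ̂(a). -/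
/-! Both remainders come from the Peano form of Taylor's theorem in a normed space,
`g (z + w) - T_K g z w = o(‖w‖ ^ K)`, where `T_K g z w = ∑_{k ≤ K} D^k g(z)[w,…,w] / k!`.
It follows from the one-variable Lagrange bound applied to
`t ↦ g (z + t • w) - t ^ K / K! • D^K g(z)[w,…,w]`, whose `K`-th derivative
`D^K g(z + t • w)[w,…,w] - D^K g(z)[w,…,w]` is small for small `w` by continuity of `D^K g`.

With `v = x' - x`, take `ψ(a) = a⁻ᴷ (f (x + a v) - T_K f x (a v))`; this choice makes
`a Δ(a) = f (x + a v) - f x` exactly. Then take `ψ̂(a) = a⁻ᴷ (h (f x + a Δ(a)) - T_K h (f x) (a Δ(a)))`,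
which tends to `0` because `a Δ(a) = f (x + a v) - f x = O(a)`. -/

open scoped BigOperators RealInnerProductSpace

/-- Δ(a) = Σ_{k=1}^K (a^{k−1}/k!) D^k f(x)[(x'−x),…,(x'−x)] + a^{K−1} ψ(a). -/
noncomputable def deltaFun {d C : ℕ} (K : ℕ)
    (f : EuclideanSpace ℝ (Fin d) → EuclideanSpace ℝ (Fin C))
    (x x' : EuclideanSpace ℝ (Fin d)) (ψ : ℝ → EuclideanSpace ℝ (Fin C)) (a : ℝ) :
    EuclideanSpace ℝ (Fin C) :=
  (∑ k ∈ Finset.Icc 1 K,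
      (a ^ (k - 1) / (Nat.factorial k : ℝ)) • iteratedFDeriv ℝ k f x (fun _ => x' - x))
    + a ^ (K - 1) • ψ a

open Filter Topology Asymptotics Finset
open scoped Nat

section Taylor

variable {E F : Type*} [NormedAddCommGroup E] [NormedSpace ℝ E]
  [NormedAddCommGroup F] [NormedSpace ℝ F]

theorem norm_sub_sum_iteratedDeriv_le {g : ℝ → F} {n : ℕ} {C : ℝ}
    (hg : ContDiff ℝ (n + 1 : ℕ) g)
    (hC : ∀ t ∈ Set.Icc (0 : ℝ) 1, ‖iteratedDeriv (n + 1) g t‖ ≤ C) :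
    ‖g 1 - ∑ k ∈ range (n + 1), (k ! : ℝ)⁻¹ • iteratedDeriv k g 0‖ ≤ C := by
  have hwithin : ∀ k ≤ n + 1, ∀ t ∈ Set.Icc (0 : ℝ) 1,
      iteratedDerivWithin k g (Set.Icc 0 1) t = iteratedDeriv k g t := fun k hk t ht =>
    iteratedDerivWithin_eq_iteratedDeriv (uniqueDiffOn_Icc zero_lt_one)
      (hg.of_le (by exact_mod_cast hk)).contDiffAt ht
  have hbound := taylor_mean_remainder_bound zero_le_one (by exact_mod_cast hg.contDiffOn)
    (Set.right_mem_Icc.2 zero_le_one) fun t ht => (hwithin _ le_rfl t ht).symm ▸ hC t ht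
  have hzero : (0 : ℝ) ∈ Set.Icc 0 1 := Set.left_mem_Icc.2 zero_le_one
  have hC0 : 0 ≤ C := (norm_nonneg _).trans (hC 0 hzero)
  rw [taylor_within_apply] at hbound
  simp only [sub_zero, one_pow, mul_one] at hbound
  rw [sum_congr rfl fun k hk => by
    rw [hwithin k (mem_range.1 hk).le 0 hzero]] at hbound
  exact hbound.trans (div_le_self hC0 (by exact_mod_cast Nat.factorial_pos n))

theorem iteratedDeriv_comp_add_smul {h : E → F} {K n : ℕ} (hh : ContDiff ℝ K h) (hn : n ≤ K)
    (z w : E) (t : ℝ) :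
    iteratedDeriv n (fun s : ℝ => h (z + s • w)) t
      = iteratedFDeriv ℝ n h (z + t • w) (fun _ => w) := by
  have hcomp : (fun s : ℝ => h (z + s • w))
      = (fun u => h (z + u)) ∘ ContinuousLinearMap.toSpanSingleton ℝ w := rfl
  have hshift : ContDiff ℝ K fun u => h (z + u) := hh.comp (contDiff_const.add contDiff_id)
  rw [iteratedDeriv_eq_iteratedFDeriv, hcomp, ContinuousLinearMap.iteratedFDeriv_comp_right _
    hshift _ (by exact_mod_cast hn),
    iteratedFDeriv_comp_add_left]
  simp

noncomputable def taylorPolyEval (h : E → F) (K : ℕ) (z w : E) : F :=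
  ∑ k ∈ range (K + 1), (k ! : ℝ)⁻¹ • iteratedFDeriv ℝ k h z (fun _ => w)

theorem norm_sub_taylorPolyEval_le {h : E → F} {n : ℕ} (hh : ContDiff ℝ (n + 1 : ℕ) h)
    {z w : E} {ε : ℝ}
    (hε : ∀ t ∈ Set.Icc (0 : ℝ) 1,
      ‖iteratedFDeriv ℝ (n + 1) h (z + t • w) - iteratedFDeriv ℝ (n + 1) h z‖ ≤ ε) :
    ‖h (z + w) - taylorPolyEval h (n + 1) z w‖ ≤ ε * ‖w‖ ^ (n + 1) := by
  set c : F := ((n + 1) ! : ℝ)⁻¹ • iteratedFDeriv ℝ (n + 1) h z (fun _ => w)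
  have hline : ContDiff ℝ (n + 1 : ℕ) fun t : ℝ => h (z + t • w) := hh.comp (by fun_prop)
  have hmon : ContDiff ℝ (n + 1 : ℕ) fun t : ℝ => t ^ (n + 1) • c := by fun_prop
  have hderiv : ∀ k ≤ n + 1, ∀ t, iteratedDeriv k (fun t => h (z + t • w) - t ^ (n + 1) • c) t
      = iteratedFDeriv ℝ k h (z + t • w) (fun _ => w)
        - ((n + 1).descFactorial k * t ^ (n + 1 - k) : ℝ) • c := by
    intro k hk t
    have hk' : (k : WithTop ℕ∞) ≤ (n + 1 : ℕ) := by exact_mod_cast hk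
    rw [iteratedDeriv_fun_sub (hline.of_le hk').contDiffAt (hmon.of_le hk').contDiffAt,
      iteratedDeriv_comp_add_smul hh hk, iteratedDeriv_smul_const (by fun_prop), iteratedDeriv_pow]
  have hfact : ((n + 1) ! : ℝ) ≠ 0 := by positivity
  have hremainder := norm_sub_sum_iteratedDeriv_le (hline.sub hmon) (C := ε * ‖w‖ ^ (n + 1))
    fun t ht => by
      rw [hderiv _ le_rfl, Nat.descFactorial_self, Nat.sub_self, pow_zero, mul_one, smul_smul,
        mul_inv_cancel₀ hfact, one_smul, ← sub_apply]
      refine ((iteratedFDeriv ℝ (n + 1) h (z + t • w) - iteratedFDeriv ℝ (n + 1) h z).le_opNorm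
        _).trans ?_
      rw [prod_const, card_univ, Fintype.card_fin]
      gcongr
      exact hε t ht
  have hlow : ∀ k ∈ range (n + 1), iteratedDeriv k (fun t : ℝ => h (z + t • w) - t ^ (n + 1) • c) 0
      = iteratedFDeriv ℝ k h z (fun _ => w) := fun k hk => by
    rw [hderiv k (mem_range.1 hk).le,
      zero_pow (Nat.sub_ne_zero_of_lt (mem_range.1 hk))]
    simp only [zero_smul, add_zero, mul_zero, sub_zero]
  rw [sum_congr rfl fun k hk => by rw [hlow k hk]] at hremainder
  rw [taylorPolyEval, sum_range_succ]
  convert hremainder using 2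
  simp only [one_smul, one_pow]
  abel

theorem ContDiff.isLittleO_sub_taylorPolyEval {h : E → F} {K : ℕ} (hh : ContDiff ℝ K h) (z : E) :
    (fun w => h (z + w) - taylorPolyEval h K z w) =o[𝓝 0] fun w => ‖w‖ ^ K := by
  cases K with
  | zero =>
    simp only [taylorPolyEval, zero_add, range_one, sum_singleton, Nat.factorial_zero, Nat.cast_one,
      inv_one, iteratedFDeriv_zero_apply, one_smul, pow_zero, isLittleO_one_iff]
    rw [tendsto_sub_nhds_zero_iff]
    exact (hh.continuous.comp (continuous_const.add continuous_id)).tendsto' 0 (h z) (by simp)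
  | succ n =>
    refine isLittleO_iff.2 fun ε hε => ?_
    obtain ⟨δ, hδ, hball⟩ := Metric.continuousAt_iff.1
      (hh.continuous_iteratedFDeriv le_rfl).continuousAt ε hε
    filter_upwards [Metric.ball_mem_nhds 0 hδ] with w hw
    rw [norm_pow, norm_norm]
    refine norm_sub_taylorPolyEval_le hh fun t ht => ?_
    have hclose : ‖(z + t • w) - z‖ < δ := by
      rw [add_sub_cancel_left, norm_smul, Real.norm_of_nonneg ht.1]
      exact (mul_le_of_le_one_left (norm_nonneg w) ht.2).trans_lt (mem_ball_zero_iff.1 hw)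
    have hnear := hball (by rwa [dist_eq_norm])
    rw [dist_eq_norm] at hnear
    exact hnear.le

theorem taylorPolyEval_smul (h : E → F) (K : ℕ) (z w : E) (a : ℝ) :
    taylorPolyEval h K z (a • w)
      = h z + ∑ k ∈ Icc 1 K, (a ^ k / k !) • iteratedFDeriv ℝ k h z (fun _ => w) := by
  rw [taylorPolyEval, range_eq_Ico, sum_eq_sum_Ico_succ_bot K.succ_pos,
    zero_add, Nat.succ_eq_add_one, Ico_add_one_right_eq_Icc]
  congr 1
  · simp
  · refine sum_congr rfl fun k _ => ?_
    have hhom := (iteratedFDeriv ℝ k h z).map_smul_univ (fun _ => a) (fun _ => w)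
    rw [hhom, prod_const, card_univ, Fintype.card_fin, smul_smul, div_eq_inv_mul]

end Taylor

theorem Asymptotics.IsLittleO.comp_pow_of_differentiableAt {E F : Type*}
    [NormedAddCommGroup E] [NormedSpace ℝ E] [NormedAddCommGroup F] {R : E → F} {u : ℝ → E} {K : ℕ}
    (hR : R =o[𝓝 0] fun w => ‖w‖ ^ K) (hu : DifferentiableAt ℝ u 0) (hu0 : u 0 = 0) :
    (fun a => R (u a)) =o[𝓝 0] fun a => a ^ K := by
  have hO : u =O[𝓝 0] fun a => a := by simpa [hu0] using hu.isBigO_sub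
  exact (hR.comp_tendsto (hO.trans_tendsto tendsto_id)).trans_isBigO (hO.norm_left.pow K)

theorem smul_deltaFun {d C K : ℕ} (hK : 1 ≤ K)
    (f : EuclideanSpace ℝ (Fin d) → EuclideanSpace ℝ (Fin C))
    (x x' : EuclideanSpace ℝ (Fin d)) (ψ : ℝ → EuclideanSpace ℝ (Fin C)) (a : ℝ) :
    a • deltaFun K f x x' ψ a
      = ∑ k ∈ Icc 1 K, (a ^ k / k !) • iteratedFDeriv ℝ k f x (fun _ => x' - x) + a ^ K • ψ a := by
  have hpow : ∀ k, 1 ≤ k → a * a ^ (k - 1) = a ^ k := fun k hk => by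
    rw [← pow_succ', Nat.sub_add_cancel hk]
  rw [deltaFun, smul_add, smul_sum, smul_smul, hpow K hK]
  congr 1
  refine sum_congr rfl fun k hk => ?_
  rw [smul_smul, ← mul_div_assoc, hpow k (mem_Icc.1 hk).1]

/-- pointwise Taylor expansion of the Mixup loss ℓ(x,y) = h(f(x)) − yᵀ f(x)
around a = 0 along the segment from x toward x', with remainders ψ, ψ̂ vanishing as a → 0⁺. -/
theorem mixup_loss_taylor_expansion (d C K : ℕ) (hK : 1 ≤ K)
    (f : EuclideanSpace ℝ (Fin d) → EuclideanSpace ℝ (Fin C))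
    (h : EuclideanSpace ℝ (Fin C) → ℝ)
    (hf : ContDiff ℝ K f) (hh : ContDiff ℝ K h)
    (x x' : EuclideanSpace ℝ (Fin d)) (y : EuclideanSpace ℝ (Fin C)) :
    ∃ (ψ : ℝ → EuclideanSpace ℝ (Fin C)) (ψh : ℝ → ℝ),
      Filter.Tendsto ψ (nhdsWithin 0 (Set.Ioc (0 : ℝ) 1)) (nhds 0) ∧
      Filter.Tendsto ψh (nhdsWithin 0 (Set.Ioc (0 : ℝ) 1)) (nhds 0) ∧
      ∀ a ∈ Set.Ioc (0 : ℝ) 1,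
        h (f (x + a • (x' - x))) - ⟪y, f (x + a • (x' - x))⟫
          = h (f x) - ⟪y, f x⟫
            - a * ⟪y, deltaFun K f x x' ψ a⟫
            + ∑ k ∈ Finset.Icc 1 K,
                (a ^ k / (Nat.factorial k : ℝ)) *
                  iteratedFDeriv ℝ k h (f x) (fun _ => deltaFun K f x x' ψ a)
            + a ^ K * ψh a := by
  set u : ℝ → EuclideanSpace ℝ (Fin C) := fun a => f (x + a • (x' - x)) - f x
  set ψ : ℝ → EuclideanSpace ℝ (Fin C) := fun a =>
    (a ^ K)⁻¹ • (f (x + a • (x' - x)) - taylorPolyEval f K x (a • (x' - x)))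
  set ψh : ℝ → ℝ := fun a => (a ^ K)⁻¹ • (h (f x + u a) - taylorPolyEval h K (f x) (u a))
  have hfd : Differentiable ℝ f := hf.differentiable (by exact_mod_cast (by omega : K ≠ 0))
  have hu : DifferentiableAt ℝ u 0 := by fun_prop
  have hincrement : ∀ a ≠ 0, a • deltaFun K f x x' ψ a = u a := fun a ha => by
    rw [smul_deltaFun hK, smul_inv_smul₀ (pow_ne_zero K ha), taylorPolyEval_smul]
    simp only [u]
    abel
  refine ⟨ψ, ψh, ?_, ?_, fun a ha => ?_⟩
  · exact ((hf.isLittleO_sub_taylorPolyEval x).comp_pow_of_differentiableAt (by fun_prop)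
      (by simp)).tendsto_inv_smul_nhds_zero.mono_left nhdsWithin_le_nhds
  · exact ((hh.isLittleO_sub_taylorPolyEval (f x)).comp_pow_of_differentiableAt hu
      (by simp [u])).tendsto_inv_smul_nhds_zero.mono_left nhdsWithin_le_nhds
  · have hΔ := hincrement a ha.1.ne'
    have hψh : a ^ K * ψh a = h (f (x + a • (x' - x))) - h (f x) - ∑ k ∈ Icc 1 K,
        (a ^ k / k !) * iteratedFDeriv ℝ k h (f x) (fun _ => deltaFun K f x x' ψ a) := by
      simp only [ψh, smul_eq_mul, mul_inv_cancel_left₀ (pow_ne_zero K ha.1.ne'), ← hΔ,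
        taylorPolyEval_smul]
      simp only [hΔ, u, add_sub_cancel]
      ring
    rw [hψh, ← real_inner_smul_right, hΔ, inner_sub_right]
    ring
end

section
/- Let f : ℝ^d → ℝ^C and h : ℝ^C → ℝ be continuous, let (x_1,y_1),…,(x_n,y_n) ∈ ℝ^d × ℝ^C, and let α, β > 0. Then the Mixup loss satisfies the symmetrization identity (1/n²) Σ_{i,j=1}^n E_{λ∼Beta(α,β)} ℓ(λx_i+(1−λ)x_j, λy_i+(1−λ)y_j) = (1/n) Σ_{i=1}^n E_{λ∼D_λ} [ (1/n) Σ_{j=1}^n ℓ(λx_i+(1−λ)x_j, y_i) ]. -/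
open MeasureTheory
open scoped BigOperators

/-- The Beta function B(a,b) = Γ(a)Γ(b)/Γ(a+b). -/
noncomputable def betaFun (a b : ℝ) : ℝ := Real.Gamma a * Real.Gamma b / Real.Gamma (a + b)

/-- The Beta(a,b) density l ↦ l^(a−1) (1−l)^(b−1) / B(a,b). -/
noncomputable def betaDensity (a b l : ℝ) : ℝ :=
  l ^ (a - 1) * (1 - l) ^ (b - 1) / betaFun a b

/-- The Beta(a,b) probability measure on [0,1]. -/
noncomputable def betaMeasure (a b : ℝ) : Measure ℝ :=
  (volume.restrict (Set.Icc (0 : ℝ) 1)).withDensity fun l => ENNReal.ofReal (betaDensity a b l)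

/-- The mixture D_λ = (a/(a+b))·Beta(a+1,b) + (b/(a+b))·Beta(b+1,a). -/
noncomputable def mixMeasure (a b : ℝ) : Measure ℝ :=
  ENNReal.ofReal (a / (a + b)) • betaMeasure (a + 1) b
    + ENNReal.ofReal (b / (a + b)) • betaMeasure (b + 1) a

open scoped RealInnerProductSpace

/-!
The loss `ℓ(x, y)` is affine in the label, so the mixed loss at `(λ, i, j)` equals
`λ ℓ(λxᵢ + (1-λ)xⱼ, yᵢ) + (1-λ) ℓ((1-λ)xⱼ + λxᵢ, yⱼ)`. Since `B(α+1, β) = α/(α+β) B(α, β)`,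
weighting `Beta(α, β)` by `λ` gives `α/(α+β) Beta(α+1, β)`; the substitution `λ ↦ 1 - λ`
exchanges `Beta(α, β)` and `Beta(β, α)`, so the second term contributes
`β/(α+β) Beta(β+1, α)` with `i` and `j` swapped. Summing over `i, j` gives the mixture `D_λ`.
-/

lemma betaFun_pos {a b : ℝ} (ha : 0 < a) (hb : 0 < b) : 0 < betaFun a b :=
  ProbabilityTheory.beta_pos ha hb

lemma betaFun_add_one_left {a b : ℝ} (ha : 0 < a) (hb : 0 < b) :
    betaFun (a + 1) b = a / (a + b) * betaFun a b := by
  have hΓ : Real.Gamma (a + b) ≠ 0 := (Real.Gamma_pos_of_pos (by linarith)).ne'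
  rw [betaFun, betaFun, Real.Gamma_add_one ha.ne', add_right_comm,
    Real.Gamma_add_one (by positivity)]
  field_simp

lemma betaDensity_mul_self {a b : ℝ} (ha : 0 < a) (hb : 0 < b) (l : ℝ) :
    betaDensity a b l * l = a / (a + b) * betaDensity (a + 1) b l := by
  have hpow : l ^ (a - 1) * l = l ^ (a + 1 - 1) := by
    rw [add_sub_cancel_right]
    rcases eq_or_ne l 0 with rfl | hl
    · rw [mul_zero, Real.zero_rpow ha.ne']
    · rw [← Real.rpow_add_one hl, sub_add_cancel]
  have hB := (betaFun_pos ha hb).ne'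
  rw [betaDensity, betaDensity, betaFun_add_one_left ha hb, ← hpow]
  field_simp

lemma betaDensity_one_sub (a b l : ℝ) : betaDensity a b (1 - l) = betaDensity b a l := by
  rw [betaDensity, betaDensity, betaFun, betaFun, sub_sub_cancel, add_comm b a]
  ring

lemma betaMeasure_eq_probabilityTheory_betaMeasure (a b : ℝ) :
    betaMeasure a b = ProbabilityTheory.betaMeasure a b := by
  rw [betaMeasure, ProbabilityTheory.betaMeasure, ← withDensity_indicator measurableSet_Icc]
  refine withDensity_congr_ae ?_
  filter_upwards [Measure.ae_ne volume 0, Measure.ae_ne volume 1] with l h0 h1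
  by_cases hl : l ∈ Set.Icc (0 : ℝ) 1
  · rw [Set.indicator_of_mem hl, ProbabilityTheory.betaPDF_of_pos_lt_one
      (lt_of_le_of_ne hl.1 (Ne.symm h0)) (lt_of_le_of_ne hl.2 h1),
      betaDensity, betaFun, ProbabilityTheory.beta]
    ring_nf
  · have hl' : ¬ (0 < l ∧ l < 1) := fun h => hl ⟨h.1.le, h.2.le⟩
    rw [Set.indicator_of_notMem hl, ProbabilityTheory.betaPDF_eq, if_neg hl', ENNReal.ofReal_zero]

lemma isProbabilityMeasure_betaMeasure {a b : ℝ} (ha : 0 < a) (hb : 0 < b) :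
    IsProbabilityMeasure (betaMeasure a b) := by
  rw [betaMeasure_eq_probabilityTheory_betaMeasure]
  exact ProbabilityTheory.isProbabilityMeasureBeta ha hb

lemma integrable_betaMeasure_of_continuous {a b : ℝ} (ha : 0 < a) (hb : 0 < b) {φ : ℝ → ℝ}
    (hφ : Continuous φ) : Integrable φ (betaMeasure a b) := by
  have := isProbabilityMeasure_betaMeasure ha hb
  obtain ⟨M, hM⟩ := (isCompact_Icc (a := (0 : ℝ)) (b := 1)).exists_bound_of_continuousOn
    hφ.continuousOn
  refine Integrable.of_bound hφ.aestronglyMeasurable M ?_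
  filter_upwards [(withDensity_absolutelyContinuous _ _).ae_le
    (ae_restrict_mem measurableSet_Icc)] with l hl using hM l hl

lemma integrable_mixMeasure_of_continuous {a b : ℝ} (ha : 0 < a) (hb : 0 < b) {φ : ℝ → ℝ}
    (hφ : Continuous φ) : Integrable φ (mixMeasure a b) :=
  ((integrable_betaMeasure_of_continuous (by linarith) hb hφ).smul_measure
    ENNReal.ofReal_ne_top).add_measure
  ((integrable_betaMeasure_of_continuous (by linarith) ha hφ).smul_measure
    ENNReal.ofReal_ne_top)

lemma integral_betaMeasure {a b : ℝ} (ha : 0 < a) (hb : 0 < b) (φ : ℝ → ℝ) :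
    ∫ l, φ l ∂betaMeasure a b = ∫ l in (0 : ℝ)..1, betaDensity a b l * φ l := by
  have hm : Measurable fun l => (betaDensity a b l).toNNReal := by
    unfold betaDensity; fun_prop
  rw [betaMeasure, show (fun l => ENNReal.ofReal (betaDensity a b l))
      = fun l => ((betaDensity a b l).toNNReal : ENNReal) from rfl,
    integral_withDensity_eq_integral_smul hm, intervalIntegral.integral_of_le zero_le_one,
    integral_Icc_eq_integral_Ioc]
  refine setIntegral_congr_fun measurableSet_Ioc fun l hl => ?_
  have hρ : 0 ≤ betaDensity a b l := div_nonneg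
    (mul_nonneg (Real.rpow_nonneg hl.1.le _) (Real.rpow_nonneg (by linarith [hl.2]) _))
    (betaFun_pos ha hb).le
  rw [NNReal.smul_def, Real.coe_toNNReal _ hρ, smul_eq_mul]

lemma integral_betaMeasure_mul_self {a b : ℝ} (ha : 0 < a) (hb : 0 < b) (φ : ℝ → ℝ) :
    ∫ l, l * φ l ∂betaMeasure a b = a / (a + b) * ∫ l, φ l ∂betaMeasure (a + 1) b := by
  rw [integral_betaMeasure ha hb, integral_betaMeasure (by linarith) hb,
    ← intervalIntegral.integral_const_mul]
  congr 1 with l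
  rw [← mul_assoc, betaDensity_mul_self ha hb, mul_assoc]

lemma integral_betaMeasure_comp_one_sub {a b : ℝ} (ha : 0 < a) (hb : 0 < b) (φ : ℝ → ℝ) :
    ∫ l, φ (1 - l) ∂betaMeasure a b = ∫ l, φ l ∂betaMeasure b a := by
  rw [integral_betaMeasure ha hb, integral_betaMeasure hb ha]
  simpa [betaDensity_one_sub] using
    intervalIntegral.integral_comp_sub_left (a := 0) (b := 1)
      (fun l => betaDensity b a l * φ l) (1 : ℝ)

lemma integral_mixMeasure {a b : ℝ} (ha : 0 < a) (hb : 0 < b) {φ : ℝ → ℝ}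
    (hφ : Continuous φ) :
    ∫ l, φ l ∂mixMeasure a b
      = a / (a + b) * ∫ l, φ l ∂betaMeasure (a + 1) b
        + b / (a + b) * ∫ l, φ l ∂betaMeasure (b + 1) a := by
  rw [mixMeasure, integral_add_measure
      ((integrable_betaMeasure_of_continuous (by linarith) hb hφ).smul_measure
        ENNReal.ofReal_ne_top)
      ((integrable_betaMeasure_of_continuous (by linarith) ha hφ).smul_measure
        ENNReal.ofReal_ne_top),
    integral_smul_measure, integral_smul_measure,
    ENNReal.toReal_ofReal (by positivity), ENNReal.toReal_ofReal (by positivity)]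
  rfl

lemma integral_betaMeasure_symmetrize {a b : ℝ} (ha : 0 < a) (hb : 0 < b) {G G' : ℝ → ℝ}
    (hG : Continuous G) (hG' : Continuous G') :
    ∫ l, (l * G l + (1 - l) * G' (1 - l)) ∂betaMeasure a b
      = a / (a + b) * ∫ l, G l ∂betaMeasure (a + 1) b
        + b / (a + b) * ∫ l, G' l ∂betaMeasure (b + 1) a := by
  rw [integral_add (integrable_betaMeasure_of_continuous ha hb (by fun_prop))
      (integrable_betaMeasure_of_continuous ha hb (by fun_prop)),
    integral_betaMeasure_mul_self ha hb,
    integral_betaMeasure_comp_one_sub ha hb (fun m => m * G' m),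
    integral_betaMeasure_mul_self hb ha, add_comm b a]

lemma sum_integral_betaMeasure_symmetrize {ι : Type*} [Fintype ι] {a b : ℝ} (ha : 0 < a)
    (hb : 0 < b) {G : ι → ι → ℝ → ℝ} (hG : ∀ i j, Continuous (G i j)) :
    ∑ i, ∑ j, ∫ l, (l * G i j l + (1 - l) * G j i (1 - l)) ∂betaMeasure a b
      = ∑ i, ∑ j, ∫ l, G i j l ∂mixMeasure a b := by
  simp only [integral_betaMeasure_symmetrize ha hb (hG _ _) (hG _ _),
    integral_mixMeasure ha hb (hG _ _), Finset.sum_add_distrib]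
  congr 1
  exact Finset.sum_comm

def mixupLoss {E F : Type*} [NormedAddCommGroup F] [InnerProductSpace ℝ F]
    (f : E → F) (h : F → ℝ) (x : E) (y : F) : ℝ :=
  h (f x) - ⟪y, f x⟫

lemma mixupLoss_smul_add_one_sub_smul {E F : Type*} [NormedAddCommGroup F]
    [InnerProductSpace ℝ F] (f : E → F) (h : F → ℝ) (x : E) (y y' : F) (l : ℝ) :
    mixupLoss f h x (l • y + (1 - l) • y')
      = l * mixupLoss f h x y + (1 - l) * mixupLoss f h x y' := by
  simp only [mixupLoss, inner_add_left, real_inner_smul_left]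
  ring

/-- symmetrization identity for the Mixup loss, with
ℓ(x,y) = h(f(x)) − yᵀ f(x):
(1/n²) Σ_{i,j} E_{λ∼Beta(α,β)} ℓ(λxᵢ+(1−λ)xⱼ, λyᵢ+(1−λ)yⱼ)
  = (1/n) Σᵢ E_{λ∼D_λ} [ (1/n) Σⱼ ℓ(λxᵢ+(1−λ)xⱼ, yᵢ) ]. -/
theorem mixup_symmetrization (d C n : ℕ)
    (f : EuclideanSpace ℝ (Fin d) → EuclideanSpace ℝ (Fin C))
    (h : EuclideanSpace ℝ (Fin C) → ℝ)
    (hf : Continuous f) (hh : Continuous h)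
    (x : Fin n → EuclideanSpace ℝ (Fin d)) (y : Fin n → EuclideanSpace ℝ (Fin C))
    (α β : ℝ) (hα : 0 < α) (hβ : 0 < β) :
    (1 / (n : ℝ) ^ 2) * ∑ i, ∑ j,
        ∫ l, (h (f (l • x i + (1 - l) • x j))
            - ⟪l • y i + (1 - l) • y j, f (l • x i + (1 - l) • x j)⟫) ∂betaMeasure α β
      = (1 / (n : ℝ)) * ∑ i,
          ∫ l, ((1 / (n : ℝ)) * ∑ j,
            (h (f (l • x i + (1 - l) • x j))
              - ⟪y i, f (l • x i + (1 - l) • x j)⟫)) ∂mixMeasure α β := by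
  set G : Fin n → Fin n → ℝ → ℝ := fun i j l => mixupLoss f h (l • x i + (1 - l) • x j) (y i)
  have hG : ∀ i j, Continuous (G i j) := fun i j => by simp only [G, mixupLoss]; fun_prop
  have hLHS : ∀ i j l, h (f (l • x i + (1 - l) • x j))
      - ⟪l • y i + (1 - l) • y j, f (l • x i + (1 - l) • x j)⟫
        = l * G i j l + (1 - l) * G j i (1 - l) := fun i j l => by
    simp only [G, sub_sub_cancel, add_comm ((1 - l) • x j)]
    exact mixupLoss_smul_add_one_sub_smul f h _ (y i) (y j) l
  have hRHS : ∀ i, ∫ l, ((1 / (n : ℝ)) * ∑ j,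
      (h (f (l • x i + (1 - l) • x j)) - ⟪y i, f (l • x i + (1 - l) • x j)⟫)) ∂mixMeasure α β
        = 1 / (n : ℝ) * ∑ j, ∫ l, G i j l ∂mixMeasure α β := fun i => by
    rw [integral_const_mul]
    exact congrArg _
      (integral_finsetSum _ fun j _ => integrable_mixMeasure_of_continuous hα hβ (hG i j))
  simp only [hLHS, hRHS, sum_integral_betaMeasure_symmetrize hα hβ hG, ← Finset.mul_sum]
  ring
end
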